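/- Let F be a real inner product space, let K be a positive integer, and let w_1, …, w_K be nonnegative reals with Σ_{k=1}^K w_k = 1. Let η : ℕ → ℝ be a nonincreasing sequence of nonnegative reals, let V ≥ 0, let E ≥ 1 and t₀ ≤ t be natural numbers with t − t₀ ≤ E − 1 and η(t₀) ≤ 2·η(t). For each k ∈ {1, …, K}, let θ_k : ℕ → F and g_k : ℕ → F satisfy θ_k(τ+1) = θ_k(τ) − η(τ) • g_k(τ) and ‖g_k(τ)‖ ≤ V for all τ with t₀ ≤ τ < t, and suppose θ_1(t₀) = θ_2(t₀) = ⋯ = θ_K(t₀). Set θ̄(t) = Σ_{k=1}^K w_k • θ_k(t). Then Σ_{k=1}^K w_k ‖θ̄(t) − θ_k(t)‖² ≤ 4·η(t)²·(E − 1)²·V². -/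

import Mathlib

theorem client_model_divergence_bound_deterministic
    {F : Type*} [NormedAddCommGroup F] [InnerProductSpace ℝ F]
    (K : ℕ) (hK : 0 < K) (w : Fin K → ℝ) (hw : ∀ k, 0 ≤ w k) (hw1 : ∑ k, w k = 1)
    (η : ℕ → ℝ) (hηnn : ∀ n, 0 ≤ η n) (hη : Antitone η)
    (V : ℝ) (hV : 0 ≤ V)
    (E t₀ t : ℕ) (hE : 1 ≤ E) (ht : t₀ ≤ t) (htE : t - t₀ ≤ E - 1)
    (hη2 : η t₀ ≤ 2 * η t)
    (θ : Fin K → ℕ → F) (g : Fin K → ℕ → F)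
    (hrec : ∀ k τ, t₀ ≤ τ → τ < t → θ k (τ + 1) = θ k τ - η τ • g k τ)
    (hg : ∀ k τ, t₀ ≤ τ → τ < t → ‖g k τ‖ ≤ V)
    (hinit : ∀ k k', θ k t₀ = θ k' t₀) :
    ∑ k, w k * ‖(∑ j, w j • θ j t) - θ k t‖ ^ 2
      ≤ 4 * η t ^ 2 * ((E : ℝ) - 1) ^ 2 * V ^ 2 := by
  set k0 : Fin K := ⟨0, hK⟩
  set c : F := θ k0 t₀ with hc
  -- deviation bound for each client
  have M : ℝ := 0
  have hdev : ∀ k : Fin K, ∀ τ, t₀ ≤ τ → τ ≤ t →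
      ‖θ k τ - c‖ ≤ ((τ - t₀ : ℕ) : ℝ) * η t₀ * V := by
    intro k τ hτ₀ hτt
    induction τ, hτ₀ using Nat.le_induction with
    | base => simp [hinit k k0, hc]
    | succ n hn ih =>
      have hnt : n < t := hτt
      have ih' := ih (le_of_lt hnt)
      rw [hrec k n hn hnt]
      have h1 : ‖θ k n - η n • g k n - c‖ ≤ ‖θ k n - c‖ + ‖η n • g k n‖ := by
        have := norm_sub_le (θ k n - c) (η n • g k n)
        simpa [sub_right_comm] using this
      have h2 : ‖η n • g k n‖ ≤ η t₀ * V := by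
        rw [norm_smul, Real.norm_eq_abs, abs_of_nonneg (hηnn n)]
        exact mul_le_mul (hη hn) (hg k n hn hnt) (norm_nonneg _)
          (le_trans (hηnn n) (hη hn))
      have hcast : ((n + 1 - t₀ : ℕ) : ℝ) = ((n - t₀ : ℕ) : ℝ) + 1 := by
        have : n + 1 - t₀ = (n - t₀) + 1 := by omega
        rw [this]; push_cast; ring
      calc ‖θ k n - η n • g k n - c‖ ≤ ‖θ k n - c‖ + ‖η n • g k n‖ := h1
        _ ≤ ((n - t₀ : ℕ) : ℝ) * η t₀ * V + η t₀ * V := add_le_add ih' h2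
        _ = ((n + 1 - t₀ : ℕ) : ℝ) * η t₀ * V := by rw [hcast]; ring
  -- the bound M := 2 * η t * (E-1) * V
  have hdevt : ∀ k : Fin K, ‖θ k t - c‖ ≤ 2 * η t * ((E : ℝ) - 1) * V := by
    intro k
    refine le_trans (hdev k t ht le_rfl) ?_
    have h1 : ((t - t₀ : ℕ) : ℝ) ≤ (E : ℝ) - 1 := by
      have : ((t - t₀ : ℕ) : ℝ) ≤ ((E - 1 : ℕ) : ℝ) := by exact_mod_cast htE
      refine le_trans this ?_
      have : ((E - 1 : ℕ) : ℝ) = (E : ℝ) - 1 := by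
        have : (1:ℕ) ≤ E := hE
        push_cast [Nat.cast_sub this]; ring
      rw [this]
    have hE1 : (0:ℝ) ≤ (E : ℝ) - 1 := by
      have : (1:ℝ) ≤ (E:ℝ) := by exact_mod_cast hE
      linarith
    calc ((t - t₀ : ℕ) : ℝ) * η t₀ * V ≤ ((E : ℝ) - 1) * (2 * η t) * V := by
          apply mul_le_mul_of_nonneg_right _ hV
          exact mul_le_mul h1 hη2 (hηnn t₀) hE1
      _ = 2 * η t * ((E : ℝ) - 1) * V := by ring
  -- variance inequality
  set y : Fin K → F := fun k => θ k t - c with hy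
  have hbar : (∑ j, w j • θ j t) - c = ∑ j, w j • y j := by
    simp only [hy, smul_sub]
    rw [Finset.sum_sub_distrib, ← Finset.sum_smul, hw1, one_smul]
  have hdiff : ∀ k : Fin K, (∑ j, w j • θ j t) - θ k t = (∑ j, w j • y j) - y k := by
    intro k
    rw [← hbar]
    simp [hy, sub_sub_sub_cancel_right]
  set ybar : F := ∑ j, w j • y j with hybar
  have key : ∑ k, w k * ‖ybar - y k‖ ^ 2 ≤ ∑ k, w k * ‖y k‖ ^ 2 := by
    have expand : ∀ k : Fin K, w k * ‖ybar - y k‖ ^ 2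
        = w k * ‖ybar‖ ^ 2 - 2 * (w k * inner ℝ ybar (y k)) + w k * ‖y k‖ ^ 2 := by
      intro k
      rw [@norm_sub_sq_real]
      ring
    rw [Finset.sum_congr rfl fun k _ => expand k]
    rw [Finset.sum_add_distrib, Finset.sum_sub_distrib]
    rw [← Finset.sum_mul, hw1, one_mul, ← Finset.mul_sum]
    have : ∑ k, w k * inner ℝ ybar (y k) = ‖ybar‖ ^ 2 := by
      have : ∑ k, w k * (inner ℝ ybar (y k) : ℝ) = inner ℝ ybar ybar := by
        rw [hybar, inner_sum]
        exact Finset.sum_congr rfl fun k _ => by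
          rw [real_inner_smul_right]
      rw [this, real_inner_self_eq_norm_sq]
    rw [this]
    have : (0:ℝ) ≤ ‖ybar‖ ^ 2 := sq_nonneg _
    linarith
  -- finish
  have hrw : ∑ k, w k * ‖(∑ j, w j • θ j t) - θ k t‖ ^ 2 = ∑ k, w k * ‖ybar - y k‖ ^ 2 := by
    exact Finset.sum_congr rfl fun k _ => by rw [hdiff k]
  rw [hrw]
  refine le_trans key ?_
  have hbound : ∀ k : Fin K, w k * ‖y k‖ ^ 2 ≤ w k * (4 * η t ^ 2 * ((E : ℝ) - 1) ^ 2 * V ^ 2) := by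
    intro k
    apply mul_le_mul_of_nonneg_left _ (hw k)
    have h := hdevt k
    have h4 : (2 * η t * ((E : ℝ) - 1) * V) ^ 2 = 4 * η t ^ 2 * ((E : ℝ) - 1) ^ 2 * V ^ 2 := by ring
    calc ‖y k‖ ^ 2 ≤ (2 * η t * ((E : ℝ) - 1) * V) ^ 2 :=
          pow_le_pow_left₀ (norm_nonneg _) h 2
      _ = _ := h4
  calc ∑ k, w k * ‖y k‖ ^ 2 ≤ ∑ k, w k * (4 * η t ^ 2 * ((E : ℝ) - 1) ^ 2 * V ^ 2) :=
        Finset.sum_le_sum fun k _ => hbound k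
    _ = 4 * η t ^ 2 * ((E : ℝ) - 1) ^ 2 * V ^ 2 := by
        rw [← Finset.sum_mul, hw1, one_mul]
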